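/- arXiv:2511.06252 — 4 statements merged into one kernel-verified Lean document; each statement's English description precedes it below -/
import Mathlib

section
/- Let S and A be finite types, let T¹, T² : S × A → PMF(S) be transition kernels, and let π¹, π² : S → PMF(A) be policies. Suppose D_TV(T¹(s,a), T²(s,a)) ≤ ε_T for all s ∈ S and a ∈ A, and D_TV(π¹(s), π²(s)) ≤ ε_π for all s ∈ S. Define the composed one-step state kernels Pⁱ : S → PMF(S) by Pⁱ(s)(s') = ∑_{a ∈ A} πⁱ(s)(a) · Tⁱ(s,a)(s') for i = 1, 2. Then D_TV(P¹(s), P²(s)) ≤ ε_T + ε_π for every s ∈ S. -/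
open scoped BigOperators

/-- Total variation distance between two PMFs on a finite type. -/
noncomputable def tv {X : Type*} [Fintype X] (p q : PMF X) : ℝ :=
  (1 / 2) * ∑ x, |(p x).toReal - (q x).toReal|

/-!
Split `π¹ T¹ - π² T² = π¹ (T¹ - T²) + (π¹ - π²) T²` and apply the triangle inequality:
the first term averages the kernel distances against `π¹`, the second is the policy distance,
because each `T²(s, a)` has total mass one.
-/

open Finset

theorem abs_mul_sub_mul_le {α : Type*} [CommRing α] [LinearOrder α] [IsStrictOrderedRing α]
    {a b c d : α} (ha : 0 ≤ a) (hd : 0 ≤ d) :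
    |a * b - c * d| ≤ a * |b - d| + |a - c| * d :=
  calc |a * b - c * d| = |a * (b - d) + (a - c) * d| := by congr 1; ring
    _ ≤ |a * (b - d)| + |(a - c) * d| := abs_add_le _ _
    _ = a * |b - d| + |a - c| * d := by rw [abs_mul, abs_mul, abs_of_nonneg ha, abs_of_nonneg hd]

namespace PMF

theorem sum_toReal_eq_one {X : Type*} [Fintype X] (p : PMF X) : ∑ x, (p x).toReal = 1 := by
  rw [← ENNReal.toReal_sum fun x _ => p.apply_ne_top x,
    ← tsum_fintype (L := SummationFilter.unconditional _), p.tsum_coe, ENNReal.toReal_one]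

theorem toReal_sum_mul {X A : Type*} [Fintype A] (p : PMF A) (K : A → PMF X) (x : X) :
    (∑ a, p a * K a x).toReal = ∑ a, (p a).toReal * (K a x).toReal := by
  rw [ENNReal.toReal_sum fun a _ => ENNReal.mul_ne_top (p.apply_ne_top a) ((K a).apply_ne_top x)]
  simp only [ENNReal.toReal_mul]

end PMF

theorem tv_mixture_le {X A : Type*} [Fintype X] [Fintype A] (p q : PMF A) (K L : A → PMF X)
    (P Q : PMF X) (hP : ∀ x, P x = ∑ a, p a * K a x) (hQ : ∀ x, Q x = ∑ a, q a * L a x) :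
    tv P Q ≤ ∑ a, (p a).toReal * tv (K a) (L a) + tv p q := by
  have hdiff (x : X) : (P x).toReal - (Q x).toReal
      = ∑ a, ((p a).toReal * (K a x).toReal - (q a).toReal * (L a x).toReal) := by
    rw [hP, hQ, PMF.toReal_sum_mul, PMF.toReal_sum_mul, sum_sub_distrib]
  calc tv P Q
      ≤ 1 / 2 * ∑ x, ∑ a, ((p a).toReal * |(K a x).toReal - (L a x).toReal|
          + |(p a).toReal - (q a).toReal| * (L a x).toReal) := by
        unfold tv
        gcongr with x
        rw [hdiff]
        exact (abs_sum_le_sum_abs _ _).trans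
          (sum_le_sum fun a _ => abs_mul_sub_mul_le ENNReal.toReal_nonneg ENNReal.toReal_nonneg)
    _ = ∑ a, (p a).toReal * tv (K a) (L a) + tv p q := by
        simp only [tv, sum_comm (γ := X), sum_add_distrib, ← mul_sum,
          PMF.sum_toReal_eq_one, mul_one, mul_add, mul_left_comm _ (1 / 2 : ℝ)]

/-- If the transition kernels are `ε_T`-close and the policies are
`ε_π`-close in total variation, then the composed one-step state kernels
`Pⁱ(s)(s') = ∑_a πⁱ(s)(a) · Tⁱ(s,a)(s')` satisfy
`D_TV(P¹(s), P²(s)) ≤ ε_T + ε_π` for every state `s`. -/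
theorem tv_composed_kernel_le {S A : Type*} [Fintype S] [Fintype A]
    (T₁ T₂ : S × A → PMF S) (π₁ π₂ : S → PMF A) (εT επ : ℝ)
    (hT : ∀ s a, tv (T₁ (s, a)) (T₂ (s, a)) ≤ εT)
    (hπ : ∀ s, tv (π₁ s) (π₂ s) ≤ επ)
    (P₁ P₂ : S → PMF S)
    (hP₁ : ∀ s s', P₁ s s' = ∑ a, π₁ s a * T₁ (s, a) s')
    (hP₂ : ∀ s s', P₂ s s' = ∑ a, π₂ s a * T₂ (s, a) s') :
    ∀ s, tv (P₁ s) (P₂ s) ≤ εT + επ := by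
  intro s
  calc tv (P₁ s) (P₂ s)
      ≤ ∑ a, (π₁ s a).toReal * tv (T₁ (s, a)) (T₂ (s, a)) + tv (π₁ s) (π₂ s) :=
        tv_mixture_le _ _ _ _ _ _ (hP₁ s) (hP₂ s)
    _ ≤ ∑ a, (π₁ s a).toReal * εT + επ := by
        gcongr with a
        exacts [hT s a, hπ s]
    _ = εT + επ := by rw [← sum_mul, PMF.sum_toReal_eq_one, one_mul]
end

section
/- Let S be a finite type, let μ₁ and μ₂ be probability mass functions on S, and let P₁, P₂ : S → PMF(S) be probability kernels. Define the pushforward distributions (μᵢPᵢ)(s') = ∑_{s ∈ S} μᵢ(s) · Pᵢ(s)(s') for i = 1, 2. Then D_TV(μ₁P₁, μ₂P₂) ≤ D_TV(μ₁, μ₂) + max_{s ∈ S} D_TV(P₁(s), P₂(s)). -/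
/-!
With `a = μ₁ s`, `b = μ₂ s`, `p = P₁ s s'`, `q = P₂ s s'`, split each term of the pushforward as
`a p - b q = (a - b) p + b (p - q)`. Summed over `s'`, the first part contributes at most
`2 D_TV(μ₁, μ₂)` because each row `P₁ s` sums to one, and the second part is a `μ₂`-average of
`2 D_TV(P₁ s, P₂ s)`.
-/

open scoped BigOperators

open Finset

theorem abs_mul_sub_mul_le_s2 {a b p q : ℝ} (hp : 0 ≤ p) (hb : 0 ≤ b) :
    |a * p - b * q| ≤ |a - b| * p + b * |p - q| :=
  calc |a * p - b * q| = |(a - b) * p + b * (p - q)| := by congr 1; ring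
    _ ≤ |(a - b) * p| + |b * (p - q)| := abs_add_le _ _
    _ = |a - b| * p + b * |p - q| := by rw [abs_mul, abs_mul, abs_of_nonneg hp, abs_of_nonneg hb]

namespace PMF

variable {α β : Type*} [Fintype α]

theorem sum_toReal_eq_one_s2 (p : PMF α) : ∑ a, (p a).toReal = 1 := by
  rw [← ENNReal.toReal_sum fun a _ => p.apply_ne_top a, ← tsum_fintype (L := .unconditional _),
    p.tsum_coe, ENNReal.toReal_one]

theorem toReal_bind_apply (μ : PMF α) (P : α → PMF β) (b : β) :
    ((μ.bind P) b).toReal = ∑ a, (μ a).toReal * (P a b).toReal := by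
  rw [bind_apply, tsum_fintype, ENNReal.toReal_sum fun a _ =>
    ENNReal.mul_ne_top (μ.apply_ne_top a) ((P a).apply_ne_top b)]
  simp only [ENNReal.toReal_mul]

end PMF

theorem two_mul_tv {X : Type*} [Fintype X] (p q : PMF X) :
    2 * tv p q = ∑ x, |(p x).toReal - (q x).toReal| := by
  rw [tv, ← mul_assoc]; norm_num

theorem tv_bind_le {α β : Type*} [Fintype α] [Fintype β] (μ₁ μ₂ : PMF α) (P₁ P₂ : α → PMF β)
    {M : ℝ} (hM : ∀ a, tv (P₁ a) (P₂ a) ≤ M) :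
    tv (μ₁.bind P₁) (μ₂.bind P₂) ≤ tv μ₁ μ₂ + M := by
  suffices 2 * tv (μ₁.bind P₁) (μ₂.bind P₂) ≤ 2 * tv μ₁ μ₂ + 2 * M by linarith
  set d : α → ℝ := fun a => |(μ₁ a).toReal - (μ₂ a).toReal|
  calc 2 * tv (μ₁.bind P₁) (μ₂.bind P₂)
      = ∑ b, |∑ a, ((μ₁ a).toReal * (P₁ a b).toReal - (μ₂ a).toReal * (P₂ a b).toReal)| := by
        simp only [two_mul_tv, PMF.toReal_bind_apply, sum_sub_distrib]
    _ ≤ ∑ b, ∑ a, (d a * (P₁ a b).toReal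
          + (μ₂ a).toReal * |(P₁ a b).toReal - (P₂ a b).toReal|) :=
        sum_le_sum fun b _ => (abs_sum_le_sum_abs _ _).trans <| sum_le_sum fun a _ =>
          abs_mul_sub_mul_le_s2 ENNReal.toReal_nonneg ENNReal.toReal_nonneg
    _ = ∑ a, (d a + (μ₂ a).toReal * (2 * tv (P₁ a) (P₂ a))) := by
        rw [sum_comm]
        simp only [sum_add_distrib, ← mul_sum, PMF.sum_toReal_eq_one_s2, mul_one, two_mul_tv]
    _ ≤ ∑ a, (d a + (μ₂ a).toReal * (2 * M)) := by
        gcongr with a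
        exact hM a
    _ = 2 * tv μ₁ μ₂ + 2 * M := by
        rw [sum_add_distrib, ← sum_mul, PMF.sum_toReal_eq_one_s2, one_mul, two_mul_tv]

/-- For PMFs `μ₁, μ₂` on a finite type `S` and probability kernels
`P₁, P₂ : S → PMF S`, the pushforward distributions `(μᵢPᵢ)(s') = ∑_s μᵢ(s) · Pᵢ(s)(s')`
satisfy `D_TV(μ₁P₁, μ₂P₂) ≤ D_TV(μ₁, μ₂) + max_s D_TV(P₁(s), P₂(s))`. -/
theorem tv_pushforward_le {S : Type*} [Fintype S]
    (μ₁ μ₂ : PMF S) (P₁ P₂ : S → PMF S)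
    (ν₁ ν₂ : PMF S)
    (hν₁ : ∀ s', ν₁ s' = ∑ s, μ₁ s * P₁ s s')
    (hν₂ : ∀ s', ν₂ s' = ∑ s, μ₂ s * P₂ s s') :
    tv ν₁ ν₂ ≤ tv μ₁ μ₂ + ⨆ s : S, tv (P₁ s) (P₂ s) := by
  have hν₁_bind : ν₁ = μ₁.bind P₁ := PMF.ext fun s' => by
    rw [hν₁, PMF.bind_apply, tsum_fintype]
  have hν₂_bind : ν₂ = μ₂.bind P₂ := PMF.ext fun s' => by
    rw [hν₂, PMF.bind_apply, tsum_fintype]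
  rw [hν₁_bind, hν₂_bind]
  exact tv_bind_le μ₁ μ₂ P₁ P₂ fun s =>
    le_ciSup (f := fun s => tv (P₁ s) (P₂ s)) (Finite.bddAbove_range _) s
end

section
/- Let S and A be finite types and consider two Markov decision processes on S and A with a common initial distribution ρ₀, transition kernels T¹, T² : S × A → PMF(S), and policies π¹, π² : S → PMF(A). Suppose D_TV(T¹(s,a), T²(s,a)) ≤ ε_T for all s, a and D_TV(π¹(s), π²(s)) ≤ ε_π for all s. Then for every t ∈ ℕ, the time-t state-action marginals satisfy D_TV(p¹_t, p²_t) ≤ t · (ε_T + ε_π) + ε_π. -/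
open scoped BigOperators

lemma pmf_sum_toReal {X : Type*} [Fintype X] (p : PMF X) : ∑ x, (p x).toReal = 1 := by
  have h : ∑ x, p x = 1 := by
    have := p.tsum_coe; rwa [tsum_fintype] at this
  rw [← ENNReal.toReal_sum (fun x _ => p.apply_ne_top x), h, ENNReal.toReal_one]

lemma tv_nonneg {X : Type*} [Fintype X] (p q : PMF X) : 0 ≤ tv p q := by
  unfold tv
  positivity

lemma tv_sum_eq {X : Type*} [Fintype X] (p q : PMF X) :
    ∑ x, |(p x).toReal - (q x).toReal| = 2 * tv p q := by
  unfold tv; ring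

/-- For two MDPs with a common initial distribution, transition kernels
`ε_T`-close and policies `ε_π`-close in total variation, the time-`t` state-action
marginals satisfy `D_TV(p¹_t, p²_t) ≤ t · (ε_T + ε_π) + ε_π`. -/
theorem tv_state_action_marginals_le {S A : Type*} [Fintype S] [Fintype A]
    (ρ₀ : PMF S) (T₁ T₂ : S × A → PMF S) (π₁ π₂ : S → PMF A) (εT επ : ℝ)
    (hT : ∀ s a, tv (T₁ (s, a)) (T₂ (s, a)) ≤ εT)
    (hπ : ∀ s, tv (π₁ s) (π₂ s) ≤ επ)
    (μ₁ μ₂ : ℕ → PMF S)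
    (hμ₁0 : μ₁ 0 = ρ₀) (hμ₂0 : μ₂ 0 = ρ₀)
    (hμ₁ : ∀ t s', μ₁ (t + 1) s' = ∑ s, ∑ a, μ₁ t s * π₁ s a * T₁ (s, a) s')
    (hμ₂ : ∀ t s', μ₂ (t + 1) s' = ∑ s, ∑ a, μ₂ t s * π₂ s a * T₂ (s, a) s')
    (p₁ p₂ : ℕ → PMF (S × A))
    (hp₁ : ∀ t s a, p₁ t (s, a) = μ₁ t s * π₁ s a)
    (hp₂ : ∀ t s a, p₂ t (s, a) = μ₂ t s * π₂ s a) :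
    ∀ t : ℕ, tv (p₁ t) (p₂ t) ≤ t * (εT + επ) + επ := by
  obtain ⟨s₀, -⟩ := ρ₀.support_nonempty
  obtain ⟨a₀, -⟩ := (π₁ s₀).support_nonempty
  have hεπ : 0 ≤ επ := le_trans (tv_nonneg _ _) (hπ s₀)
  have hεT : 0 ≤ εT := le_trans (tv_nonneg _ _) (hT s₀ a₀)
  -- Claim 1: tv (p₁ t) (p₂ t) ≤ tv (μ₁ t) (μ₂ t) + επ
  have claim1 : ∀ t, tv (p₁ t) (p₂ t) ≤ tv (μ₁ t) (μ₂ t) + επ := by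
    intro t
    have key : ∑ x : S × A, |((p₁ t) x).toReal - ((p₂ t) x).toReal|
        ≤ (∑ s, |((μ₁ t) s).toReal - ((μ₂ t) s).toReal|) + 2 * επ := by
      rw [Fintype.sum_prod_type]
      have h1 : ∀ s : S, ∑ a, |((p₁ t) (s, a)).toReal - ((p₂ t) (s, a)).toReal|
          ≤ |((μ₁ t) s).toReal - ((μ₂ t) s).toReal| + ((μ₂ t) s).toReal * (2 * επ) := by
        intro s
        have h2 : ∀ a : A, |((p₁ t) (s, a)).toReal - ((p₂ t) (s, a)).toReal|
            ≤ |((μ₁ t) s).toReal - ((μ₂ t) s).toReal| * (π₁ s a).toReal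
              + ((μ₂ t) s).toReal * |(π₁ s a).toReal - (π₂ s a).toReal| := by
          intro a
          rw [hp₁, hp₂, ENNReal.toReal_mul, ENNReal.toReal_mul]
          set m1 := ((μ₁ t) s).toReal
          set m2 := ((μ₂ t) s).toReal
          set q1 := (π₁ s a).toReal
          set q2 := (π₂ s a).toReal
          have e : m1 * q1 - m2 * q2 = (m1 - m2) * q1 + m2 * (q1 - q2) := by ring
          calc |m1 * q1 - m2 * q2| ≤ |(m1 - m2) * q1| + |m2 * (q1 - q2)| := by
                rw [e]; exact abs_add_le _ _
            _ = |m1 - m2| * q1 + m2 * |q1 - q2| := by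
                rw [abs_mul, abs_mul, abs_of_nonneg ENNReal.toReal_nonneg,
                  abs_of_nonneg ENNReal.toReal_nonneg]
        calc ∑ a, |((p₁ t) (s, a)).toReal - ((p₂ t) (s, a)).toReal|
            ≤ ∑ a, (|((μ₁ t) s).toReal - ((μ₂ t) s).toReal| * (π₁ s a).toReal
              + ((μ₂ t) s).toReal * |(π₁ s a).toReal - (π₂ s a).toReal|) :=
              Finset.sum_le_sum fun a _ => h2 a
          _ = |((μ₁ t) s).toReal - ((μ₂ t) s).toReal| * (∑ a, (π₁ s a).toReal)
              + ((μ₂ t) s).toReal * (∑ a, |(π₁ s a).toReal - (π₂ s a).toReal|) := by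
              rw [Finset.sum_add_distrib, ← Finset.mul_sum, ← Finset.mul_sum]
          _ = |((μ₁ t) s).toReal - ((μ₂ t) s).toReal|
              + ((μ₂ t) s).toReal * (2 * tv (π₁ s) (π₂ s)) := by
              rw [pmf_sum_toReal, tv_sum_eq, mul_one]
          _ ≤ |((μ₁ t) s).toReal - ((μ₂ t) s).toReal| + ((μ₂ t) s).toReal * (2 * επ) :=
              add_le_add le_rfl (mul_le_mul_of_nonneg_left (by linarith [hπ s])
                ENNReal.toReal_nonneg)
      calc ∑ s, ∑ a, |((p₁ t) (s, a)).toReal - ((p₂ t) (s, a)).toReal|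
          ≤ ∑ s, (|((μ₁ t) s).toReal - ((μ₂ t) s).toReal| + ((μ₂ t) s).toReal * (2 * επ)) :=
            Finset.sum_le_sum fun s _ => h1 s
        _ = (∑ s, |((μ₁ t) s).toReal - ((μ₂ t) s).toReal|)
            + (∑ s, ((μ₂ t) s).toReal) * (2 * επ) := by
            rw [Finset.sum_add_distrib, ← Finset.sum_mul]
        _ = (∑ s, |((μ₁ t) s).toReal - ((μ₂ t) s).toReal|) + 2 * επ := by
            rw [pmf_sum_toReal, one_mul]
    have h2tv := tv_sum_eq (p₁ t) (p₂ t)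
    have h2tvμ := tv_sum_eq (μ₁ t) (μ₂ t)
    linarith
  -- Claim 2: tv (μ₁ (t+1)) (μ₂ (t+1)) ≤ tv (p₁ t) (p₂ t) + εT
  have claim2 : ∀ t, tv (μ₁ (t + 1)) (μ₂ (t + 1)) ≤ tv (p₁ t) (p₂ t) + εT := by
    intro t
    have hm1 : ∀ s' : S, ((μ₁ (t + 1)) s').toReal
        = ∑ s, ∑ a, ((p₁ t) (s, a)).toReal * ((T₁ (s, a)) s').toReal := by
      intro s'
      rw [hμ₁ t s', ENNReal.toReal_sum (fun s _ => by
        exact ENNReal.sum_ne_top.2 fun a _ =>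
          ENNReal.mul_ne_top (ENNReal.mul_ne_top ((μ₁ t).apply_ne_top s)
            ((π₁ s).apply_ne_top a)) ((T₁ (s, a)).apply_ne_top s'))]
      refine Finset.sum_congr rfl fun s _ => ?_
      rw [ENNReal.toReal_sum (fun a _ =>
        ENNReal.mul_ne_top (ENNReal.mul_ne_top ((μ₁ t).apply_ne_top s)
          ((π₁ s).apply_ne_top a)) ((T₁ (s, a)).apply_ne_top s'))]
      refine Finset.sum_congr rfl fun a _ => ?_
      rw [hp₁, ENNReal.toReal_mul, ENNReal.toReal_mul]
    have hm2 : ∀ s' : S, ((μ₂ (t + 1)) s').toReal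
        = ∑ s, ∑ a, ((p₂ t) (s, a)).toReal * ((T₂ (s, a)) s').toReal := by
      intro s'
      rw [hμ₂ t s', ENNReal.toReal_sum (fun s _ => by
        exact ENNReal.sum_ne_top.2 fun a _ =>
          ENNReal.mul_ne_top (ENNReal.mul_ne_top ((μ₂ t).apply_ne_top s)
            ((π₂ s).apply_ne_top a)) ((T₂ (s, a)).apply_ne_top s'))]
      refine Finset.sum_congr rfl fun s _ => ?_
      rw [ENNReal.toReal_sum (fun a _ =>
        ENNReal.mul_ne_top (ENNReal.mul_ne_top ((μ₂ t).apply_ne_top s)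
          ((π₂ s).apply_ne_top a)) ((T₂ (s, a)).apply_ne_top s'))]
      refine Finset.sum_congr rfl fun a _ => ?_
      rw [hp₂, ENNReal.toReal_mul, ENNReal.toReal_mul]
    have key : ∑ s', |((μ₁ (t + 1)) s').toReal - ((μ₂ (t + 1)) s').toReal|
        ≤ (∑ x : S × A, |((p₁ t) x).toReal - ((p₂ t) x).toReal|) + 2 * εT := by
      have step1 : ∀ s' : S, |((μ₁ (t + 1)) s').toReal - ((μ₂ (t + 1)) s').toReal|
          ≤ ∑ s, ∑ a, (|((p₁ t) (s, a)).toReal - ((p₂ t) (s, a)).toReal|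
              * ((T₁ (s, a)) s').toReal
            + ((p₂ t) (s, a)).toReal
              * |((T₁ (s, a)) s').toReal - ((T₂ (s, a)) s').toReal|) := by
        intro s'
        rw [hm1 s', hm2 s', ← Finset.sum_sub_distrib]
        refine le_trans (Finset.abs_sum_le_sum_abs _ _) (Finset.sum_le_sum fun s _ => ?_)
        rw [← Finset.sum_sub_distrib]
        refine le_trans (Finset.abs_sum_le_sum_abs _ _) (Finset.sum_le_sum fun a _ => ?_)
        set r1 := ((p₁ t) (s, a)).toReal
        set r2 := ((p₂ t) (s, a)).toReal
        set u1 := ((T₁ (s, a)) s').toReal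
        set u2 := ((T₂ (s, a)) s').toReal
        have e : r1 * u1 - r2 * u2 = (r1 - r2) * u1 + r2 * (u1 - u2) := by ring
        calc |r1 * u1 - r2 * u2| ≤ |(r1 - r2) * u1| + |r2 * (u1 - u2)| := by
              rw [e]; exact abs_add_le _ _
          _ = |r1 - r2| * u1 + r2 * |u1 - u2| := by
              rw [abs_mul, abs_mul, abs_of_nonneg ENNReal.toReal_nonneg,
                abs_of_nonneg ENNReal.toReal_nonneg]
      calc ∑ s', |((μ₁ (t + 1)) s').toReal - ((μ₂ (t + 1)) s').toReal|
          ≤ ∑ s', ∑ s, ∑ a, (|((p₁ t) (s, a)).toReal - ((p₂ t) (s, a)).toReal|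
              * ((T₁ (s, a)) s').toReal
            + ((p₂ t) (s, a)).toReal
              * |((T₁ (s, a)) s').toReal - ((T₂ (s, a)) s').toReal|) :=
            Finset.sum_le_sum fun s' _ => step1 s'
        _ = ∑ s, ∑ a, ∑ s', (|((p₁ t) (s, a)).toReal - ((p₂ t) (s, a)).toReal|
              * ((T₁ (s, a)) s').toReal
            + ((p₂ t) (s, a)).toReal
              * |((T₁ (s, a)) s').toReal - ((T₂ (s, a)) s').toReal|) := by
            rw [Finset.sum_comm]
            exact Finset.sum_congr rfl fun s _ => Finset.sum_comm
        _ = ∑ s, ∑ a, (|((p₁ t) (s, a)).toReal - ((p₂ t) (s, a)).toReal|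
            + ((p₂ t) (s, a)).toReal * (2 * tv (T₁ (s, a)) (T₂ (s, a)))) := by
            refine Finset.sum_congr rfl fun s _ => Finset.sum_congr rfl fun a _ => ?_
            rw [Finset.sum_add_distrib, ← Finset.mul_sum, ← Finset.mul_sum,
              pmf_sum_toReal, mul_one, tv_sum_eq]
        _ ≤ ∑ s, ∑ a, (|((p₁ t) (s, a)).toReal - ((p₂ t) (s, a)).toReal|
            + ((p₂ t) (s, a)).toReal * (2 * εT)) := by
            refine Finset.sum_le_sum fun s _ => Finset.sum_le_sum fun a _ =>
              add_le_add le_rfl (mul_le_mul_of_nonneg_left (by linarith [hT s a])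
                ENNReal.toReal_nonneg)
        _ = (∑ x : S × A, |((p₁ t) x).toReal - ((p₂ t) x).toReal|)
            + (∑ x : S × A, ((p₂ t) x).toReal) * (2 * εT) := by
            rw [Fintype.sum_prod_type, Fintype.sum_prod_type]
            rw [Finset.sum_mul, ← Finset.sum_add_distrib]
            refine Finset.sum_congr rfl fun s _ => ?_
            rw [Finset.sum_add_distrib, Finset.sum_mul]
        _ = (∑ x : S × A, |((p₁ t) x).toReal - ((p₂ t) x).toReal|) + 2 * εT := by
            rw [pmf_sum_toReal, one_mul]
    have h2tv := tv_sum_eq (p₁ t) (p₂ t)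
    have h2tvμ := tv_sum_eq (μ₁ (t + 1)) (μ₂ (t + 1))
    linarith
  -- Base case
  have base : tv (μ₁ 0) (μ₂ 0) = 0 := by
    rw [hμ₁0, hμ₂0]
    unfold tv
    simp
  -- Induction: tv (μ₁ t) (μ₂ t) ≤ t * (εT + επ)
  have hind : ∀ t : ℕ, tv (μ₁ t) (μ₂ t) ≤ t * (εT + επ) := by
    intro t
    induction t with
    | zero => simp [base]
    | succ n ih =>
        have := claim2 n
        have := claim1 n
        push_cast
        linarith
  intro t
  have := claim1 t
  have := hind t
  linarith
end

section
/- Let S and A be finite types. Let T, T̂ : S × A → PMF(S) be a true transition kernel and a learned model kernel, let π, π_D : S → PMF(A) be a target policy and a behavior policy, let ρ₀ be a common initial distribution, let r : S × A → ℝ satisfy |r(s,a)| ≤ R for all s, a, and let γ ∈ [0,1). Let ε_T, ε_π, ε_S, C_T, C_π ≥ 0 and suppose D_TV(T(s,a), T̂(s,a)) ≤ ε_T + C_T · ε_S for all s, a, and D_TV(π(s), π_D(s)) ≤ ε_π for all s. Let G(π) denote the discounted return of π under T and Ĝ(π) the discounted return of π under T̂. Then |G(π) − Ĝ(π)| ≤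 Rγ[4ε_π + 2ε_T + (C_π + 2C_T)ε_S]/(1 − γ)² + 2R(2ε_π + C_π ε_S)/(1 − γ). -/
open scoped BigOperators

/-!
Write `ε = ε_T + C_T ε_S`. Both marginal chains use the same policy, so the state-action
marginals are exactly as far apart as the state marginals, and one step of the two kernels
adds at most `ε` to their total variation distance: `tv(p_t, p̂_t) ≤ ε t`. The per-step
expected rewards therefore differ by at most `2Rεt`, and summing against `γ^t` gives
`|G − Ĝ| ≤ 2Rε ∑ t γ^t = 2Rεγ/(1 − γ)²`, which the stated bound exceeds by nonnegative terms.
-/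

open Finset

lemma PMF.sum_toReal_eq_one_s11 {X : Type*} [Fintype X] (q : PMF X) : ∑ x, (q x).toReal = 1 := by
  rw [← ENNReal.toReal_sum fun x _ => q.apply_ne_top x,
    ← tsum_fintype (L := SummationFilter.unconditional X), q.tsum_coe, ENNReal.toReal_one]

lemma PMF.toReal_sum_mul_apply {X Y : Type*} [Fintype X] (μ : PMF X) (K : X → PMF Y) (y : Y) :
    (∑ x, μ x * K x y).toReal = ∑ x, (μ x).toReal * (K x y).toReal := by
  rw [ENNReal.toReal_sum fun x _ => ENNReal.mul_ne_top (μ.apply_ne_top x) ((K x).apply_ne_top y)]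
  simp_rw [ENNReal.toReal_mul]

lemma tv_self {X : Type*} [Fintype X] (p : PMF X) : tv p p = 0 := by
  simp [tv]

lemma abs_sum_toReal_mul_le {X : Type*} [Fintype X] (q : PMF X) {f : X → ℝ} {R : ℝ}
    (hf : ∀ x, |f x| ≤ R) : |∑ x, (q x).toReal * f x| ≤ R :=
  calc |∑ x, (q x).toReal * f x| ≤ ∑ x, (q x).toReal * R := by
        refine (abs_sum_le_sum_abs _ _).trans (sum_le_sum fun x _ => ?_)
        rw [abs_mul, ENNReal.abs_toReal]
        exact mul_le_mul_of_nonneg_left (hf x) ENNReal.toReal_nonneg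
    _ = R := by rw [← sum_mul, q.sum_toReal_eq_one_s11, one_mul]

lemma abs_sum_toReal_mul_sub_le {X : Type*} [Fintype X] (q q' : PMF X) {f : X → ℝ} {R : ℝ}
    (hf : ∀ x, |f x| ≤ R) :
    |∑ x, (q x).toReal * f x - ∑ x, (q' x).toReal * f x| ≤ 2 * R * tv q q' :=
  calc |∑ x, (q x).toReal * f x - ∑ x, (q' x).toReal * f x|
      ≤ ∑ x, |(q x).toReal - (q' x).toReal| * R := by
        rw [← sum_sub_distrib]
        refine (abs_sum_le_sum_abs _ _).trans (sum_le_sum fun x _ => ?_)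
        rw [← sub_mul, abs_mul]
        exact mul_le_mul_of_nonneg_left (hf x) (abs_nonneg _)
    _ = 2 * R * tv q q' := by rw [tv, ← sum_mul]; ring

theorem tv_le_tv_add_of_mixture {X Y : Type*} [Fintype X] [Fintype Y] (μ μ' : PMF X)
    (K K' : X → PMF Y) (ν ν' : PMF Y) (hν : ∀ y, ν y = ∑ x, μ x * K x y)
    (hν' : ∀ y, ν' y = ∑ x, μ' x * K' x y) {ε : ℝ} (hK : ∀ x, tv (K x) (K' x) ≤ ε) :
    tv ν ν' ≤ tv μ μ' + ε := by
  set dμ := fun x => |(μ x).toReal - (μ' x).toReal|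
  set dK := fun x y => |(K x y).toReal - (K' x y).toReal|
  have hpoint : ∀ y, |(ν y).toReal - (ν' y).toReal| ≤
      ∑ x, (dμ x * (K x y).toReal + (μ' x).toReal * dK x y) := by
    intro y
    rw [hν, hν', PMF.toReal_sum_mul_apply, PMF.toReal_sum_mul_apply, ← sum_sub_distrib]
    refine (abs_sum_le_sum_abs _ _).trans (sum_le_sum fun x _ => ?_)
    have hsplit : (μ x).toReal * (K x y).toReal - (μ' x).toReal * (K' x y).toReal =
        ((μ x).toReal - (μ' x).toReal) * (K x y).toReal +
          (μ' x).toReal * ((K x y).toReal - (K' x y).toReal) := by ring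
    rw [hsplit]
    refine (abs_add_le _ _).trans_eq ?_
    rw [abs_mul, abs_mul, ENNReal.abs_toReal, ENNReal.abs_toReal]
  have hsum : ∑ y, |(ν y).toReal - (ν' y).toReal| ≤ 2 * tv μ μ' + 2 * ε :=
    calc ∑ y, |(ν y).toReal - (ν' y).toReal|
        ≤ ∑ y, ∑ x, (dμ x * (K x y).toReal + (μ' x).toReal * dK x y) :=
          sum_le_sum fun y _ => hpoint y
      _ = ∑ x, dμ x + ∑ x, (μ' x).toReal * (2 * tv (K x) (K' x)) := by
          simp only [tv, dK, sum_comm (γ := Y), sum_add_distrib, ← mul_sum,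
            PMF.sum_toReal_eq_one_s11, mul_one]
          ring_nf
      _ ≤ ∑ x, dμ x + ∑ x, (μ' x).toReal * (2 * ε) := by
          gcongr with x
          exact hK x
      _ = 2 * tv μ μ' + 2 * ε := by rw [← sum_mul, μ'.sum_toReal_eq_one_s11, tv]; ring
  rw [tv]
  linarith

theorem tv_eq_tv_of_apply_eq_mul_policy {S A : Type*} [Fintype S] [Fintype A] (μ μ' : PMF S)
    (π : S → PMF A) (p p' : PMF (S × A)) (hp : ∀ s a, p (s, a) = μ s * π s a)
    (hp' : ∀ s a, p' (s, a) = μ' s * π s a) : tv p p' = tv μ μ' := by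
  simp only [tv, Fintype.sum_prod_type, hp, hp', ENNReal.toReal_mul, ← sub_mul, abs_mul,
    ENNReal.abs_toReal, ← mul_sum, PMF.sum_toReal_eq_one_s11, mul_one]

lemma summable_pow_mul_of_abs_le {a : ℕ → ℝ} {R γ : ℝ} (hγ0 : 0 ≤ γ) (hγ1 : γ < 1)
    (ha : ∀ t, |a t| ≤ R) : Summable fun t => γ ^ t * a t := by
  refine ((summable_geometric_of_lt_one hγ0 hγ1).mul_right R).of_norm_bounded fun t => ?_
  rw [Real.norm_eq_abs, abs_mul, abs_pow, abs_of_nonneg hγ0]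
  exact mul_le_mul_of_nonneg_left (ha t) (pow_nonneg hγ0 t)

theorem abs_tsum_pow_mul_sub_le {a b : ℕ → ℝ} {R C γ : ℝ} (hγ0 : 0 ≤ γ) (hγ1 : γ < 1)
    (ha : ∀ t, |a t| ≤ R) (hb : ∀ t, |b t| ≤ R) (hab : ∀ t, |a t - b t| ≤ C * t) :
    |∑' t, γ ^ t * a t - ∑' t, γ ^ t * b t| ≤ C * (γ / (1 - γ) ^ 2) := by
  have hγ : ‖γ‖ < 1 := by rwa [Real.norm_eq_abs, abs_of_nonneg hγ0]
  rw [← (summable_pow_mul_of_abs_le hγ0 hγ1 ha).tsum_sub (summable_pow_mul_of_abs_le hγ0 hγ1 hb),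
    ← Real.norm_eq_abs]
  refine tsum_of_norm_bounded ((hasSum_coe_mul_geometric_of_norm_lt_one hγ).mul_left C)
    fun t => ?_
  rw [← mul_sub, Real.norm_eq_abs, abs_mul, abs_pow, abs_of_nonneg hγ0]
  calc γ ^ t * |a t - b t| ≤ γ ^ t * (C * t) :=
        mul_le_mul_of_nonneg_left (hab t) (pow_nonneg hγ0 t)
    _ = C * (t * γ ^ t) := by ring

theorem generalization_error_bound_general {S A : Type*} [Fintype S] [Fintype A]
    (ρ₀ : PMF S) (T That : S × A → PMF S) (π : S → PMF A)
    (εT επ εS CT Cπ : ℝ)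
    (hεπ : 0 ≤ επ) (hεS : 0 ≤ εS) (hCπ : 0 ≤ Cπ)
    (hT : ∀ s a, tv (T (s, a)) (That (s, a)) ≤ εT + CT * εS)
    (μ μhat : ℕ → PMF S)
    (hμ0 : μ 0 = ρ₀) (hμhat0 : μhat 0 = ρ₀)
    (hμ : ∀ t s', μ (t + 1) s' = ∑ s, ∑ a, μ t s * π s a * T (s, a) s')
    (hμhat : ∀ t s', μhat (t + 1) s' = ∑ s, ∑ a, μhat t s * π s a * That (s, a) s')
    (p phat : ℕ → PMF (S × A))
    (hp : ∀ t s a, p t (s, a) = μ t s * π s a)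
    (hphat : ∀ t s a, phat t (s, a) = μhat t s * π s a)
    (r : S × A → ℝ) (R : ℝ) (hr : ∀ s a, |r (s, a)| ≤ R)
    (γ : ℝ) (hγ0 : 0 ≤ γ) (hγ1 : γ < 1)
    (G Ghat : ℝ)
    (hG : G = ∑' t : ℕ, γ ^ t * ∑ sa : S × A, (p t sa).toReal * r sa)
    (hGhat : Ghat = ∑' t : ℕ, γ ^ t * ∑ sa : S × A, (phat t sa).toReal * r sa) :
    |G - Ghat| ≤
      R * γ * (4 * επ + 2 * εT + (Cπ + 2 * CT) * εS) / (1 - γ) ^ 2 +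
        2 * R * (2 * επ + Cπ * εS) / (1 - γ) := by
  have hr' : ∀ sa : S × A, |r sa| ≤ R := fun sa => hr sa.1 sa.2
  have hR : 0 ≤ R := (abs_nonneg _).trans (hr' (p 0).support_nonempty.some)
  have htv_state : ∀ t, tv (p t) (phat t) = tv (μ t) (μhat t) := fun t =>
    tv_eq_tv_of_apply_eq_mul_policy _ _ π _ _ (hp t) (hphat t)
  have htv : ∀ t : ℕ, tv (p t) (phat t) ≤ (εT + CT * εS) * t := by
    intro t
    induction t with
    | zero => simp [htv_state, hμ0, hμhat0, tv_self]
    | succ t ih =>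
      have hstep := tv_le_tv_add_of_mixture (p t) (phat t) T That (μ (t + 1)) (μhat (t + 1))
        (fun s' => by simp only [hμ, Fintype.sum_prod_type, hp])
        (fun s' => by simp only [hμhat, Fintype.sum_prod_type, hphat]) (fun sa => hT sa.1 sa.2)
      rw [htv_state] at ih hstep ⊢
      push_cast
      linarith
  have hreturn : |G - Ghat| ≤ 2 * R * (εT + CT * εS) * (γ / (1 - γ) ^ 2) := by
    rw [hG, hGhat]
    refine abs_tsum_pow_mul_sub_le hγ0 hγ1 (fun t => abs_sum_toReal_mul_le (p t) hr')
      (fun t => abs_sum_toReal_mul_le (phat t) hr') fun t => ?_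
    refine (abs_sum_toReal_mul_sub_le (p t) (phat t) hr').trans ?_
    rw [mul_assoc (2 * R)]
    exact mul_le_mul_of_nonneg_left (htv t) (by positivity)
  refine hreturn.trans (le_add_of_le_of_nonneg ?_ (by positivity))
  rw [← mul_div_assoc]
  refine div_le_div_of_nonneg_right ?_ (by positivity)
  nlinarith [mul_nonneg (mul_nonneg hR hγ0) hεπ, mul_nonneg (mul_nonneg hR hγ0) (mul_nonneg hCπ hεS)]

/-- Theorem 1 of the paper: For a true kernel `T` and a learned kernel
`T̂` that are `(ε_T + C_T·ε_S)`-close, and a target policy `π` that is `ε_π`-close to a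
behavior policy `π_D`, with reward bounded by `R` and discount `γ ∈ [0,1)`, the return
of `π` under `T` and the return of `π` under `T̂` satisfy
`|G(π) − Ĝ(π)| ≤ Rγ[4ε_π + 2ε_T + (C_π + 2C_T)ε_S]/(1−γ)²
  + 2R(2ε_π + C_π ε_S)/(1−γ)`. -/
theorem generalization_error_bound {S A : Type*} [Fintype S] [Fintype A]
    (ρ₀ : PMF S) (T That : S × A → PMF S) (π πD : S → PMF A)
    (εT επ εS CT Cπ : ℝ)
    (hεT : 0 ≤ εT) (hεπ : 0 ≤ επ) (hεS : 0 ≤ εS) (hCT : 0 ≤ CT) (hCπ : 0 ≤ Cπ)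
    (hT : ∀ s a, tv (T (s, a)) (That (s, a)) ≤ εT + CT * εS)
    (hπ : ∀ s, tv (π s) (πD s) ≤ επ)
    (μ μhat : ℕ → PMF S)
    (hμ0 : μ 0 = ρ₀) (hμhat0 : μhat 0 = ρ₀)
    (hμ : ∀ t s', μ (t + 1) s' = ∑ s, ∑ a, μ t s * π s a * T (s, a) s')
    (hμhat : ∀ t s', μhat (t + 1) s' = ∑ s, ∑ a, μhat t s * π s a * That (s, a) s')
    (p phat : ℕ → PMF (S × A))
    (hp : ∀ t s a, p t (s, a) = μ t s * π s a)
    (hphat : ∀ t s a, phat t (s, a) = μhat t s * π s a)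
    (r : S × A → ℝ) (R : ℝ) (hr : ∀ s a, |r (s, a)| ≤ R)
    (γ : ℝ) (hγ0 : 0 ≤ γ) (hγ1 : γ < 1)
    (G Ghat : ℝ)
    (hG : G = ∑' t : ℕ, γ ^ t * ∑ sa : S × A, (p t sa).toReal * r sa)
    (hGhat : Ghat = ∑' t : ℕ, γ ^ t * ∑ sa : S × A, (phat t sa).toReal * r sa) :
    |G - Ghat| ≤
      R * γ * (4 * επ + 2 * εT + (Cπ + 2 * CT) * εS) / (1 - γ) ^ 2 +
        2 * R * (2 * επ + Cπ * εS) / (1 - γ) :=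
  generalization_error_bound_general ρ₀ T That π εT επ εS CT Cπ hεπ hεS hCπ hT μ μhat hμ0 hμhat0 hμ
    hμhat p phat hp hphat r R hr γ hγ0 hγ1 G Ghat hG hGhat
end
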